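/- arXiv:math/9903191 — 4 statements merged into one kernel-verified Lean document; each statement's English description precedes it below -/
import Mathlib

section
/- Let A be a ℤ-graded commutative associative algebra and let δ : A → A be a homogeneous linear map of degree −1 which is a differential operator of order ≤ 2 (i.e. F_δ³ ≡ 0; δ² = 0 is not needed for this statement). Then the adjoint action of the bracket [a,b] = (−1)^{|a|} F_δ²(a,b) is an odd graded derivation of the product: for all homogeneous a, b, c ∈ A, [a, bc] = [a,b] c + (−1)^{(|a|+1)|b|} b [a,c]. -/
open scoped BigOperators

/-- Sum of the degrees in a list of (element, degree) pairs. -/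
def degSum {A : Type*} (l : List (A × ℤ)) : ℤ := (l.map Prod.snd).sum

/-- Akman's multibrackets `F_D^n` on a graded algebra, evaluated on a list of
(homogeneous element, degree) pairs given in *reverse* order:
`FD D dD [(aₙ,iₙ),…,(a₁,i₁)] = F_D^n(a₁,…,aₙ)`, where `dD` is the degree of `D`.
`FD D dD [(a,i)] = D a` and
`F_D^{n+1}(a₁,…,aₙ₊₁) = F_D^n(a₁,…,aₙ·aₙ₊₁) - F_D^n(a₁,…,aₙ)·aₙ₊₁
  - (-1)^{|aₙ|(|a₁|+⋯+|aₙ₋₁|+|D|)} aₙ·F_D^n(a₁,…,aₙ₋₁,aₙ₊₁)`. -/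
def FD {A : Type*} [Ring A] (D : A → A) (dD : ℤ) : List (A × ℤ) → A
  | [] => 0
  | [(a, _)] => D a
  | (b, j) :: (a, i) :: rest =>
      FD D dD ((a * b, i + j) :: rest)
        - FD D dD ((a, i) :: rest) * b
        - (i * (degSum rest + dD)).negOnePow • (a * FD D dD ((b, j) :: rest))
  termination_by l => l.length

/-- The BV bracket `[a,b] = (-1)^{|a|} F_D²(a,b)` of elements `a, b` of degrees `i, j`,
for an operator `D` of degree `dD`. -/
def bvBracket {A : Type*} [Ring A] (D : A → A) (dD : ℤ) (i j : ℤ) (a b : A) : A :=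
  i.negOnePow • FD D dD [(b, j), (a, i)]

/-- Let `A` be a ℤ-graded commutative associative algebra and
`δ : A → A` a homogeneous linear map of degree `-1` which is a differential operator of
order `≤ 2` (`F_δ³ ≡ 0`; `δ² = 0` is not needed).  Then the adjoint action of the
bracket `[a,b] = (-1)^{|a|} F_δ²(a,b)` is an odd graded derivation of the product:
`[a, bc] = [a,b] c + (-1)^{(|a|+1)|b|} b [a,c]` for homogeneous `a, b, c`. -/
theorem stmt2 {A : Type*} [Ring A] [Algebra ℚ A] (𝒜 : ℤ → Submodule ℚ A)
    (hmul : ∀ {i j : ℤ} {a b : A}, a ∈ 𝒜 i → b ∈ 𝒜 j → a * b ∈ 𝒜 (i + j))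
    (hcomm : ∀ {i j : ℤ} (a b : A), a ∈ 𝒜 i → b ∈ 𝒜 j →
      a * b = (i * j).negOnePow • (b * a))
    (δ : A →ₗ[ℚ] A)
    (hδdeg : ∀ {i : ℤ} {a : A}, a ∈ 𝒜 i → δ a ∈ 𝒜 (i - 1))
    (horder2 : ∀ {i j k : ℤ} (a b c : A), a ∈ 𝒜 i → b ∈ 𝒜 j → c ∈ 𝒜 k →
      FD (⇑δ) (-1) [(c, k), (b, j), (a, i)] = 0)
    {i j k : ℤ} (a b c : A) (ha : a ∈ 𝒜 i) (hb : b ∈ 𝒜 j) (hc : c ∈ 𝒜 k) :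
    bvBracket (⇑δ) (-1) i (j + k) a (b * c) =
      bvBracket (⇑δ) (-1) i j a b * c +
        ((i + 1) * j).negOnePow • (b * bvBracket (⇑δ) (-1) i k a c) := by

  have h := horder2 a b c ha hb hc
  rw [show ([(c, k), (b, j), (a, i)] : List (A × ℤ)) = (c,k) :: (b,j) :: [(a,i)] from rfl,
    FD] at h
  set X := FD (⇑δ) (-1) [(b * c, j + k), (a, i)] with hX
  set Y := FD (⇑δ) (-1) [(b, j), (a, i)] with hY
  set Z := FD (⇑δ) (-1) [(c, k), (a, i)] with hZ
  have hexp : X = Y * c + (j * (degSum [(a,i)] + -1)).negOnePow • (b * Z) := by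
    linear_combination (norm := abel) h
  simp only [bvBracket, ← hX, ← hY, ← hZ, hexp, smul_add, smul_smul, smul_mul_assoc,
    mul_smul_comm, degSum, List.map_cons, List.map_nil, List.sum_cons, List.sum_nil,
    ← Int.negOnePow_add]
  congr 2
  · rw [Int.negOnePow_eq_iff]
    refine ⟨-j, by ring⟩
end

section
/- Let A be a ℤ-graded associative algebra (not necessarily commutative) and let D : A → A be a homogeneous linear map of odd degree with D² = 0. Then for all homogeneous a, b ∈ A: D F_D²(a,b) + F_D²(Da, b) + (−1)^{|a|} F_D²(a, Db) = 0. Equivalently, D is a derivation of the bracket [a,b] = (−1)^{|a|} F_D²(a,b), although D is in general not a derivation of the product. -/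
open scoped BigOperators

/-- Let `A` be a ℤ-graded associative algebra (not necessarily
commutative) and `D : A → A` a homogeneous linear map of odd degree `dD` with `D² = 0`.
Then for all homogeneous `a, b`:
`D F_D²(a,b) + F_D²(Da, b) + (-1)^{|a|} F_D²(a, Db) = 0`,
i.e. `D` is a derivation of the bracket `[a,b] = (-1)^{|a|} F_D²(a,b)`. -/
theorem stmt4 {A : Type*} [Ring A] [Algebra ℚ A] (𝒜 : ℤ → Submodule ℚ A)
    (hmul : ∀ {i j : ℤ} {a b : A}, a ∈ 𝒜 i → b ∈ 𝒜 j → a * b ∈ 𝒜 (i + j))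
    (D : A →ₗ[ℚ] A) (dD : ℤ) (hodd : Odd dD)
    (hDdeg : ∀ {i : ℤ} {a : A}, a ∈ 𝒜 i → D a ∈ 𝒜 (i + dD))
    (hDsq : ∀ a : A, D (D a) = 0)
    {i j : ℤ} (a b : A) (ha : a ∈ 𝒜 i) (hb : b ∈ 𝒜 j) :
    D (FD (⇑D) dD [(b, j), (a, i)]) + FD (⇑D) dD [(b, j), (D a, i + dD)] +
      i.negOnePow • FD (⇑D) dD [(D b, j + dD), (a, i)] = 0 := by
  obtain ⟨k, hk⟩ := hodd
  have e1 : ∀ m : ℤ, (m * dD).negOnePow = m.negOnePow := by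
    intro m
    rw [hk, show m * (2 * k + 1) = 2 * (m * k) + m by ring, Int.negOnePow_add,
      Int.negOnePow_two_mul, one_mul]
  simp only [FD, degSum, List.map_nil, List.sum_nil, zero_add, map_sub, hDsq,
    e1, Int.negOnePow_add, Int.negOnePow_odd dD ⟨k, hk⟩, Units.smul_def, map_zsmul,
    mul_zero, smul_zero, sub_zero, zero_sub, zero_mul, smul_sub, Units.val_mul,
    Units.val_neg, Units.val_one, mul_neg, mul_one, neg_smul, one_smul]
  abel
end

section
/- Let A be a ℤ-graded commutative associative algebra and let D : A → A be a homogeneous linear map of odd degree. Then each bracket F_D^n is graded symmetric (i.e. graded skew-symmetric after suspension): for all n ≥ 2, all 1 ≤ i < n, and all homogeneous a_1,…,a_n ∈ A, F_D^n(a_1,…,a_i,a_{i+1},…,a_n) = (−1)^{|a_i||a_{i+1}|} F_D^n(a_1,…,a_{i+1},a_i,…,a_n). Consequently F_D^n descends to a map on the graded exterior power Λ^n A. -/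
open scoped BigOperators

lemma degSum_cons' {A : Type*} (a : A) (i : ℤ) (t : List (A × ℤ)) :
    degSum ((a,i)::t) = i + degSum t := by
  simp [degSum]

lemma degSum_swap' {A : Type*} (l₁ l₂ : List (A × ℤ)) (x y : A × ℤ) :
    degSum (l₁ ++ x::y::l₂) = degSum (l₁ ++ y::x::l₂) := by
  simp [degSum]; ring

lemma FD_cons_cons' {A : Type*} [Ring A] (D : A → A) (dD : ℤ) (p q : A × ℤ)
    (rest : List (A × ℤ)) :
    FD D dD (p::q::rest) = FD D dD ((q.1*p.1, q.2+p.2)::rest)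
      - FD D dD (q::rest) * p.1
      - (q.2 * (degSum rest + dD)).negOnePow • (q.1 * FD D dD (p::rest)) := by
  obtain ⟨b, j⟩ := p; obtain ⟨a, i⟩ := q; rw [FD]

lemma FD_mem' {A : Type*} [Ring A] [Algebra ℚ A] (𝒜 : ℤ → Submodule ℚ A)
    (hmul : ∀ {i j : ℤ} {a b : A}, a ∈ 𝒜 i → b ∈ 𝒜 j → a * b ∈ 𝒜 (i + j))
    (D : A →ₗ[ℚ] A) (dD : ℤ)
    (hDdeg : ∀ {i : ℤ} {a : A}, a ∈ 𝒜 i → D a ∈ 𝒜 (i + dD)) :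
    ∀ (N : ℕ) (l : List (A × ℤ)), l.length ≤ N →
    (∀ p ∈ l, p.1 ∈ 𝒜 p.2) → FD (⇑D) dD l ∈ 𝒜 (degSum l + dD) := by
  intro N
  induction N with
  | zero =>
    intro l hl _
    match l, hl with
    | [], _ => simpa [FD] using (𝒜 _).zero_mem
  | succ N ih =>
    intro l hl hhom
    match l with
    | [] => simpa [FD] using (𝒜 _).zero_mem
    | [(a,i)] =>
      rw [FD]
      simpa [degSum] using hDdeg (hhom (a,i) (by simp))
    | (b,j)::(a,i)::rest =>
      rw [FD]
      have hb : b ∈ 𝒜 j := hhom (b,j) (by simp)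
      have ha : a ∈ 𝒜 i := hhom (a,i) (by simp)
      have hrest : ∀ p ∈ rest, p.1 ∈ 𝒜 p.2 := fun p hp => hhom p (by simp [hp])
      have hlen : rest.length + 1 ≤ N := by simpa using hl
      have h1 := ih ((a*b, i+j)::rest) (by simpa using hlen)
        (by rintro p hp; rcases List.mem_cons.1 hp with h | h
            · subst h; exact hmul ha hb
            · exact hrest p h)
      have h2 := ih ((a,i)::rest) (by simpa using hlen)
        (by rintro p hp; rcases List.mem_cons.1 hp with h | h
            · subst h; exact ha
            · exact hrest p h)
      have h3 := ih ((b,j)::rest) (by simpa using hlen)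
        (by rintro p hp; rcases List.mem_cons.1 hp with h | h
            · subst h; exact hb
            · exact hrest p h)
      rw [degSum_cons'] at h1 h2 h3 ⊢
      rw [degSum_cons']
      refine sub_mem (sub_mem ?_ ?_) ?_
      · have := h1
        rw [show i + j + degSum rest + dD = j + (i + degSum rest) + dD by ring] at this
        exact this
      · have := hmul h2 hb
        rw [show i + degSum rest + dD + j = j + (i + degSum rest) + dD by ring] at this
        exact this
      · rw [Units.smul_def]
        refine zsmul_mem ?_ _
        have := hmul ha h3
        rw [show i + (j + degSum rest + dD) = j + (i + degSum rest) + dD by ring] at this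
        exact this

lemma FD_smul' {A : Type*} [Ring A] [Algebra ℚ A] (D : A →ₗ[ℚ] A) (dD : ℤ) (u : ℤˣ) :
    ∀ (N : ℕ) (rest : List (A × ℤ)) (a : A) (i : ℤ), rest.length ≤ N →
    FD (⇑D) dD (((u:ℤ) • a, i)::rest) = u • FD (⇑D) dD ((a,i)::rest) := by
  intro N
  induction N with
  | zero =>
    intro rest a i h
    match rest, h with
    | [], _ => rw [FD, FD, Units.smul_def]; exact map_zsmul D _ a
  | succ N ih =>
    intro rest a i h
    match rest with
    | [] => rw [FD, FD, Units.smul_def]; exact map_zsmul D _ a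
    | (c,k)::t =>
      have hlen : t.length ≤ N := by simpa using h
      rw [FD, FD, mul_smul_comm, ih t _ _ hlen, ih t a i hlen, mul_smul_comm,
        mul_smul_comm, Units.smul_def, Units.smul_def, Units.smul_def, smul_comm,
        ← smul_sub, ← smul_sub]
      rfl

lemma FD_swap0' {A : Type*} [Ring A] [Algebra ℚ A] (𝒜 : ℤ → Submodule ℚ A)
    (hmul : ∀ {i j : ℤ} {a b : A}, a ∈ 𝒜 i → b ∈ 𝒜 j → a * b ∈ 𝒜 (i + j))
    (hcomm : ∀ {i j : ℤ} (a b : A), a ∈ 𝒜 i → b ∈ 𝒜 j →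
      a * b = (i * j).negOnePow • (b * a))
    (D : A →ₗ[ℚ] A) (dD : ℤ)
    (hDdeg : ∀ {i : ℤ} {a : A}, a ∈ 𝒜 i → D a ∈ 𝒜 (i + dD))
    (a b : A) (i j : ℤ) (rest : List (A × ℤ))
    (ha : a ∈ 𝒜 i) (hb : b ∈ 𝒜 j) (hrest : ∀ p ∈ rest, p.1 ∈ 𝒜 p.2) :
    FD (⇑D) dD ((b,j)::(a,i)::rest) =
      (j*i).negOnePow • FD (⇑D) dD ((a,i)::(b,j)::rest) := by
  have homa : ∀ p ∈ (a,i)::rest, p.1 ∈ 𝒜 p.2 := by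
    rintro p hp; rcases List.mem_cons.1 hp with h|h
    · subst h; exact ha
    · exact hrest p h
  have homb : ∀ p ∈ (b,j)::rest, p.1 ∈ 𝒜 p.2 := by
    rintro p hp; rcases List.mem_cons.1 hp with h|h
    · subst h; exact hb
    · exact hrest p h
  have hFa : FD (⇑D) dD ((a,i)::rest) ∈ 𝒜 (i + degSum rest + dD) := by
    have := FD_mem' 𝒜 hmul D dD hDdeg _ ((a,i)::rest) le_rfl homa
    rwa [degSum_cons'] at this
  have hFb : FD (⇑D) dD ((b,j)::rest) ∈ 𝒜 (j + degSum rest + dD) := by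
    have := FD_mem' 𝒜 hmul D dD hDdeg _ ((b,j)::rest) le_rfl homb
    rwa [degSum_cons'] at this
  rw [FD, FD]
  have hab : a * b = (((i*j).negOnePow : ℤˣ) : ℤ) • (b * a) := by
    rw [← Units.smul_def]; exact hcomm a b ha hb
  rw [hab, add_comm i j, FD_smul' D dD ((i*j).negOnePow) rest.length rest (b*a) (j+i) le_rfl]
  have h2 : FD (⇑D) dD ((a,i)::rest) * b
      = ((i + degSum rest + dD)*j).negOnePow • (b * FD (⇑D) dD ((a,i)::rest)) :=
    hcomm _ b hFa hb
  have h3 : FD (⇑D) dD ((b,j)::rest) * a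
      = ((j + degSum rest + dD)*i).negOnePow • (a * FD (⇑D) dD ((b,j)::rest)) :=
    hcomm _ a hFb ha
  rw [h2, h3, smul_sub, smul_sub, smul_smul, smul_smul, ← Int.negOnePow_add,
    ← Int.negOnePow_add]
  rw [mul_comm j i,
    show (i*j + (j + degSum rest + dD) * i).negOnePow = (i * (degSum rest + dD)).negOnePow from by
      rw [Int.negOnePow_eq_iff]; exact ⟨i*j, by ring⟩,
    show (i*j + j * (degSum rest + dD)).negOnePow = ((i + degSum rest + dD) * j).negOnePow from by
      rw [Int.negOnePow_eq_iff]; exact ⟨0, by ring⟩]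
  exact sub_right_comm _ _ _

lemma FD_swap1' {A : Type*} [Ring A] [Algebra ℚ A] (𝒜 : ℤ → Submodule ℚ A)
    (hcomm : ∀ {i j : ℤ} (a b : A), a ∈ 𝒜 i → b ∈ 𝒜 j →
      a * b = (i * j).negOnePow • (b * a))
    (D : A →ₗ[ℚ] A) (dD : ℤ)
    (a b c : A) (i j k : ℤ) (t : List (A × ℤ))
    (ha : a ∈ 𝒜 i) (hc : c ∈ 𝒜 k) :
    FD (⇑D) dD ((b,j)::(a,i)::(c,k)::t) =
      (i*k).negOnePow • FD (⇑D) dD ((b,j)::(c,k)::(a,i)::t) := by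
  have eca : c * a = (((i*k).negOnePow : ℤˣ) : ℤ) • (a * c) := by
    rw [← Units.smul_def, hcomm c a hc ha, mul_comm k i]
  simp only [FD, degSum_cons']
  have h1 : FD (⇑D) dD ((c * (a * b), k + (i + j)) :: t)
      = (i*k).negOnePow • FD (⇑D) dD ((a * (c * b), i + (k + j)) :: t) := by
    rw [← mul_assoc, eca, smul_mul_assoc, mul_assoc, show k + (i + j) = i + (k + j) by ring,
      FD_smul' D dD ((i*k).negOnePow) t.length t (a * (c * b)) (i + (k + j)) le_rfl]
  have h2 : FD (⇑D) dD ((c * a, k + i) :: t)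
      = (i*k).negOnePow • FD (⇑D) dD ((a * c, i + k) :: t) := by
    rw [eca, add_comm k i,
      FD_smul' D dD ((i*k).negOnePow) t.length t (a * c) (i + k) le_rfl]
  rw [h1, h2, ← mul_assoc (FD (⇑D) dD ((c,k)::t)) a b]
  simp only [sub_mul, mul_sub, smul_mul_assoc, mul_smul_comm, smul_sub, smul_smul]
  rw [← mul_assoc a (FD (⇑D) dD ((c,k)::t)) b,
    ← mul_assoc a c (FD (⇑D) dD ((b,j)::t)),
    ← mul_assoc (FD (⇑D) dD ((a,i)::t)) c b,
    ← mul_assoc c (FD (⇑D) dD ((a,i)::t)) b,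
    ← mul_assoc c a (FD (⇑D) dD ((b,j)::t)),
    eca]
  simp only [smul_mul_assoc, mul_smul_comm, smul_smul, Units.smul_def]
  rw [show ((((i * k).negOnePow * ((k * (i + degSum t + dD)).negOnePow * (i * (degSum t + dD)).negOnePow) : ℤˣ) : ℤ) * (((i * k).negOnePow : ℤˣ) : ℤ))
        = (((i * (k + degSum t + dD)).negOnePow * (k * (degSum t + dD)).negOnePow : ℤˣ) : ℤ) from by
      rw [← Units.val_mul]; congr 1
      simp only [← Int.negOnePow_add]
      rw [Int.negOnePow_eq_iff]
      exact ⟨i*k, by ring⟩,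
    show (i * k).negOnePow * (i * (degSum t + dD)).negOnePow = (i * (k + degSum t + dD)).negOnePow from by
      rw [← Int.negOnePow_add]; congr 1; ring,
    show (i * k).negOnePow * (k * (i + degSum t + dD)).negOnePow = (k * (degSum t + dD)).negOnePow from by
      rw [← Int.negOnePow_add, Int.negOnePow_eq_iff]; exact ⟨i*k, by ring⟩]
  abel

lemma FD_swap' {A : Type*} [Ring A] [Algebra ℚ A] (𝒜 : ℤ → Submodule ℚ A)
    (hmul : ∀ {i j : ℤ} {a b : A}, a ∈ 𝒜 i → b ∈ 𝒜 j → a * b ∈ 𝒜 (i + j))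
    (hcomm : ∀ {i j : ℤ} (a b : A), a ∈ 𝒜 i → b ∈ 𝒜 j →
      a * b = (i * j).negOnePow • (b * a))
    (D : A →ₗ[ℚ] A) (dD : ℤ)
    (hDdeg : ∀ {i : ℤ} {a : A}, a ∈ 𝒜 i → D a ∈ 𝒜 (i + dD)) :
    ∀ (N : ℕ) (l₁ : List (A × ℤ)) (x y : A × ℤ) (l₂ : List (A × ℤ)),
    l₁.length ≤ N → (∀ p ∈ l₁ ++ x::y::l₂, p.1 ∈ 𝒜 p.2) →
    FD (⇑D) dD (l₁ ++ x::y::l₂) = (x.2*y.2).negOnePow • FD (⇑D) dD (l₁ ++ y::x::l₂) := by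
  intro N
  induction N with
  | zero =>
    intro l₁ x y l₂ hl hhom
    match l₁, hl with
    | [], _ =>
      obtain ⟨b, j⟩ := x; obtain ⟨a, i⟩ := y
      simp only [List.nil_append] at hhom ⊢
      exact FD_swap0' 𝒜 hmul hcomm D dD hDdeg a b i j l₂ (hhom (a,i) (by simp))
        (hhom (b,j) (by simp)) (fun p hp => hhom p (by simp [hp]))
  | succ N ih =>
    intro l₁ x y l₂ hl hhom
    match l₁ with
    | [] =>
      obtain ⟨b, j⟩ := x; obtain ⟨a, i⟩ := y
      simp only [List.nil_append] at hhom ⊢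
      exact FD_swap0' 𝒜 hmul hcomm D dD hDdeg a b i j l₂ (hhom (a,i) (by simp))
        (hhom (b,j) (by simp)) (fun p hp => hhom p (by simp [hp]))
    | [w] =>
      obtain ⟨b, j⟩ := w; obtain ⟨aa, i⟩ := x; obtain ⟨cc, k⟩ := y
      simp only [List.cons_append, List.nil_append] at hhom ⊢
      exact FD_swap1' 𝒜 hcomm D dD aa b cc i j k l₂ (hhom (aa,i) (by simp))
        (hhom (cc,k) (by simp))
    | w1::w2::l₁' =>
      simp only [List.cons_append] at hhom ⊢
      have hw1 : w1.1 ∈ 𝒜 w1.2 := hhom w1 (by simp)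
      have hw2 : w2.1 ∈ 𝒜 w2.2 := hhom w2 (by simp)
      have hlen : l₁'.length + 1 ≤ N := by simpa using hl
      have hrest : ∀ p ∈ l₁' ++ x::y::l₂, p.1 ∈ 𝒜 p.2 :=
        fun p hp => hhom p (List.mem_cons_of_mem _ (List.mem_cons_of_mem _ hp))
      have e1 := ih ((w2.1*w1.1, w2.2+w1.2)::l₁') x y l₂ (by simpa using hlen)
        (by rintro p hp
            rcases List.mem_cons.1 hp with h|h
            · subst h; exact hmul hw2 hw1
            · exact hrest p h)
      have e2 := ih (w2::l₁') x y l₂ (by simpa using hlen)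
        (by rintro p hp
            rcases List.mem_cons.1 hp with h|h
            · subst h; exact hw2
            · exact hrest p h)
      have e3 := ih (w1::l₁') x y l₂ (by simpa using hlen)
        (by rintro p hp
            rcases List.mem_cons.1 hp with h|h
            · subst h; exact hw1
            · exact hrest p h)
      simp only [List.cons_append] at e1 e2 e3
      rw [FD_cons_cons' (⇑D) dD w1 w2 (l₁' ++ x::y::l₂),
        FD_cons_cons' (⇑D) dD w1 w2 (l₁' ++ y::x::l₂),
        e1, e2, e3, degSum_swap',
        smul_sub, smul_sub, smul_mul_assoc, mul_smul_comm, smul_smul, smul_smul,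
        mul_comm ((x.2*y.2).negOnePow) ((w2.2 * (degSum (l₁' ++ y::x::l₂) + dD)).negOnePow)]

/-- Let `A` be a ℤ-graded commutative associative algebra and
`D : A → A` a homogeneous linear map of odd degree.  Then each bracket `F_D^n` is graded
symmetric: swapping two adjacent homogeneous arguments of degrees `d_p, d_q` changes
`F_D^n` by the sign `(-1)^{d_p d_q}`. -/
theorem stmt7 {A : Type*} [Ring A] [Algebra ℚ A] (𝒜 : ℤ → Submodule ℚ A)
    (hmul : ∀ {i j : ℤ} {a b : A}, a ∈ 𝒜 i → b ∈ 𝒜 j → a * b ∈ 𝒜 (i + j))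
    (hcomm : ∀ {i j : ℤ} (a b : A), a ∈ 𝒜 i → b ∈ 𝒜 j →
      a * b = (i * j).negOnePow • (b * a))
    (D : A →ₗ[ℚ] A) (dD : ℤ) (hodd : Odd dD)
    (hDdeg : ∀ {i : ℤ} {a : A}, a ∈ 𝒜 i → D a ∈ 𝒜 (i + dD)) :
    ∀ (n : ℕ) (p q : Fin n), (p : ℕ) + 1 = (q : ℕ) →
      ∀ (a : Fin n → A) (d : Fin n → ℤ), (∀ r, a r ∈ 𝒜 (d r)) →
        FD (⇑D) dD (((List.finRange n).map fun r => (a r, d r)).reverse) =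
          (d p * d q).negOnePow •
            FD (⇑D) dD (((List.finRange n).map fun r =>
              (a (Equiv.swap p q r), d (Equiv.swap p q r))).reverse) := by
  intro n p q hpq a d hhom
  set f : Fin n → A × ℤ := fun r => (a r, d r) with hf
  set f' : Fin n → A × ℤ := fun r => (a (Equiv.swap p q r), d (Equiv.swap p q r)) with hf'
  set M := (List.finRange n).map f with hMdef
  set M' := (List.finRange n).map f' with hM'def
  have hlenM : M.length = n := by simp [hMdef]
  have hlenM' : M'.length = n := by simp [hM'def]
  have hpn : (p : ℕ) < n := p.isLt
  have hqn : (q : ℕ) < n := q.isLt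
  have hgM : ∀ (r : Fin n) (h : (r:ℕ) < M.length), M[(r:ℕ)]'h = f r := by
    intro r h; simp [hMdef]
  have hgM' : ∀ (r : Fin n) (h : (r:ℕ) < M'.length), M'[(r:ℕ)]'h = f' r := by
    intro r h; simp [hM'def]
  have hfr : ∀ r : Fin n, (r:ℕ) ≠ ↑p → (r:ℕ) ≠ ↑q → f' r = f r := by
    intro r h₁ h₂
    simp only [hf', hf]
    rw [Equiv.swap_apply_of_ne_of_ne (Fin.ne_of_val_ne h₁) (Fin.ne_of_val_ne h₂)]
  have hM : M = M.take ↑p ++ f p :: f q :: M.drop (↑q+1) := by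
    conv_lhs => rw [← List.take_append_drop ↑p M]
    congr 1
    rw [List.drop_eq_getElem_cons (by omega : (p:ℕ) < M.length), hgM p]
    congr 1
    rw [show (↑p+1 : ℕ) = ↑q from hpq, List.drop_eq_getElem_cons (by omega : (q:ℕ) < M.length),
      hgM q]
  have htake : M'.take ↑p = M.take ↑p := by
    apply List.ext_getElem (by simp [hMdef, hM'def])
    intro u h1 h2
    have hu : u < ↑p := by simp at h1; omega
    simp only [List.getElem_take, hMdef, hM'def, List.getElem_map, List.getElem_finRange]
    exact hfr _ (by simp; omega) (by simp; omega)
  have hdrop : M'.drop (↑q+1) = M.drop (↑q+1) := by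
    apply List.ext_getElem (by simp [hMdef, hM'def])
    intro u h1 h2
    simp only [List.getElem_drop, hMdef, hM'def, List.getElem_map, List.getElem_finRange]
    have h1' : u < n - (↑q + 1) := by simpa [hM'def] using h1
    exact hfr _ (by simp; omega) (by simp; omega)
  have hM' : M' = M.take ↑p ++ f q :: f p :: M.drop (↑q+1) := by
    conv_lhs => rw [← List.take_append_drop ↑p M']
    rw [htake]
    congr 1
    rw [List.drop_eq_getElem_cons (by omega : (p:ℕ) < M'.length), hgM' p]
    rw [show f' p = f q from by rw [hf, hf']; simp [Equiv.swap_apply_left]]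
    congr 1
    rw [show (↑p+1 : ℕ) = ↑q from hpq, List.drop_eq_getElem_cons (by omega : (q:ℕ) < M'.length),
      hgM' q, show f' q = f p from by rw [hf, hf']; simp [Equiv.swap_apply_right], hdrop]
  have hrev : M.reverse = (M.drop (↑q+1)).reverse ++ f q :: f p :: (M.take ↑p).reverse := by
    conv_lhs => rw [hM]
    simp [List.reverse_append]
  have hrev' : M'.reverse = (M.drop (↑q+1)).reverse ++ f p :: f q :: (M.take ↑p).reverse := by
    conv_lhs => rw [hM']
    simp [List.reverse_append]
  have homM : ∀ z ∈ M, z.1 ∈ 𝒜 z.2 := by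
    intro z hz
    rw [hMdef, List.mem_map] at hz
    obtain ⟨r, -, rfl⟩ := hz
    rw [hf]
    exact hhom r
  have key := FD_swap' 𝒜 hmul hcomm D dD hDdeg ((M.drop (↑q+1)).reverse).length
    ((M.drop (↑q+1)).reverse) (f q) (f p) ((M.take ↑p).reverse) le_rfl
    (by intro z hz
        rw [← hrev, List.mem_reverse] at hz
        exact homM z hz)
  rw [hrev, hrev', key, hf]
  simp only []
  rw [mul_comm (d q) (d p)]
end

section
/- Let (A, d, D) be a commutative BV∞-algebra: A is a ℤ-graded commutative associative algebra, d : A → A is a homogeneous derivation of degree +1 with d² = 0, and D : A → A is an odd linear map with D² = 0 such that every homogeneous component of D − d has negative degree. Write D = d + D_2 + D_3 + ⋯ with D_n homogeneous, and assume (as in the decomposition lemma) that the degree −1 component D_2 is a differential operator of order ≤ 2 on A (F_{D_2}³ ≡ 0). Then the cohomology H(A,d) is a Batalin–Vilkovisky algebra: it inherits a graded commutative associative product from A, the operator D_2 induces a well-defined operator D̄_2 on H(A,d) of degree −1 with D̄_2² = 0, and D̄_2 is a differential operator of order ≤ 2 with respect to the induced product. -/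
/-!
Writing `d = D₁`, the component of `D² = ∑ Dₙ Dₘ` in degree `6 - 2k` is
`∑_{n+m=k} Dₙ Dₘ`, so `D² = 0` forces each of these sums to vanish; `k = 3` and `k = 4` give
`d D₂ + D₂ d = 0` and `d D₃ + D₂² + D₃ d = 0`, i.e. `D₂` is a chain map for `d` and squares to
zero up to the homotopy `D₃`. The product descends because `d` is a graded derivation: identities
between linear maps need only be checked on homogeneous elements, and, `d` being homogeneous, every
`d`-cocycle is a sum of homogeneous cocycles.
-/

open scoped BigOperators

namespace DirectSum

open Finset

variable {ι R M : Type*} [DecidableEq ι] [Semiring R] [AddCommMonoid M] [Module R M]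
  {𝒜 : ι → Submodule R M} [Decomposition 𝒜]

theorem linearMap_ext_of_decomposition {N : Type*} [AddCommMonoid N] [Module R N]
    {f g : M →ₗ[R] N} (h : ∀ i, ∀ a ∈ 𝒜 i, f a = g a) : f = g := by
  have hle : ⨆ i, 𝒜 i ≤ LinearMap.eqLocus f g := iSup_le h
  rw [(Decomposition.isInternal 𝒜).submodule_iSup_eq_top] at hle
  exact LinearMap.ext fun a => hle Submodule.mem_top

theorem sum_filter_eq_zero_of_sum_eq_zero {κ : Type*} (s : Finset κ) (deg : κ → ι)
    (x : κ → M) (hx : ∀ p ∈ s, x p ∈ 𝒜 (deg p)) (h : ∑ p ∈ s, x p = 0) (i : ι) :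
    ∑ p ∈ s with deg p = i, x p = 0 := by
  have hi := congrArg (fun y => (decompose 𝒜 y i : M)) h
  simp only [decompose_sum, sum_apply, AddSubmonoidClass.coe_finsetSum, decompose_zero,
    zero_apply, ZeroMemClass.coe_zero] at hi
  rw [sum_filter]
  refine (sum_congr rfl fun p hp => ?_).trans hi
  split_ifs with hpi
  · exact (decompose_of_mem_same 𝒜 (hpi ▸ hx p hp)).symm
  · exact (decompose_of_mem_ne 𝒜 (hx p hp) hpi).symm

theorem ker_le_iSup_inf_ker [Add ι] [IsRightCancelAdd ι] (f : M →ₗ[R] M) (s : ι)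
    (hf : ∀ i, ∀ a ∈ 𝒜 i, f a ∈ 𝒜 (i + s)) :
    LinearMap.ker f ≤ ⨆ i, 𝒜 i ⊓ LinearMap.ker f := by
  classical
  intro a ha
  rw [← sum_support_decompose 𝒜 a]
  refine Submodule.sum_mem _ fun j hj => Submodule.mem_iSup_of_mem j ⟨SetLike.coe_mem _, ?_⟩
  have hsum : ∑ p ∈ (decompose 𝒜 a).support, f (decompose 𝒜 a p) = 0 := by
    rw [← map_sum, sum_support_decompose, LinearMap.mem_ker.mp ha]
  have hj0 := sum_filter_eq_zero_of_sum_eq_zero _ (· + s) _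
    (fun p _ => hf p _ (SetLike.coe_mem _)) hsum (j + s)
  simpa only [add_left_inj, filter_eq', if_pos hj, sum_singleton, SetLike.mem_coe,
    LinearMap.mem_ker] using hj0

end DirectSum

section SquareZero

open DirectSum Finset

variable {R M : Type*} [Semiring R] [AddCommMonoid M] [Module R M]
  {𝒜 : ℤ → Submodule R M} [Decomposition 𝒜]

theorem sum_antidiagonal_comp_eq_zero (Dop : ℕ → M →ₗ[R] M) (hD0 : Dop 0 = 0)
    (hdeg : ∀ n : ℕ, 1 ≤ n → ∀ {i : ℤ} {a : M}, a ∈ 𝒜 i →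
      Dop n a ∈ 𝒜 (i + (3 - 2 * (n : ℤ))))
    (hfin : ∀ a : M, (Function.support fun n => Dop n a).Finite)
    (hDsq : ∀ a : M, (∑ᶠ n : ℕ, Dop n (∑ᶠ m : ℕ, Dop m a)) = 0) (k : ℕ) :
    ∑ p ∈ antidiagonal k, Dop p.1 ∘ₗ Dop p.2 = 0 := by
  refine linearMap_ext_of_decomposition (𝒜 := 𝒜) fun i a ha => ?_
  simp only [LinearMap.sum_apply, LinearMap.comp_apply, LinearMap.zero_apply]
  set S := (hfin a).toFinset ∪ (hfin (∑ᶠ m, Dop m a)).toFinset ∪ range (k + 1)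
  have hS : ∀ n ≤ k, n ∈ S := fun n hn => mem_union_right _ (mem_range.mpr (by omega))
  have hsq : ∑ p ∈ S ×ˢ S, Dop p.1 (Dop p.2 a) = 0 := by
    have h := hDsq a
    rw [finsum_eq_sum_of_support_subset _ (s := S) fun n hn =>
        mem_union_left _ (mem_union_right _ ((hfin _).mem_toFinset.mpr hn)),
      finsum_eq_sum_of_support_subset _ (s := S) fun n hn =>
        mem_union_left _ (mem_union_left _ ((hfin a).mem_toFinset.mpr hn))] at h
    simpa only [map_sum, sum_product] using h
  have hmem : ∀ p ∈ S ×ˢ S, Dop p.1 (Dop p.2 a) ∈ 𝒜 (i + 6 - 2 * ((p.1 + p.2 : ℕ) : ℤ)) := by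
    rintro ⟨n, m⟩ -
    rcases n.eq_zero_or_pos with rfl | hn
    · simp [hD0]
    rcases m.eq_zero_or_pos with rfl | hm
    · simp [hD0]
    convert hdeg n hn (hdeg m hm ha) using 2
    push_cast
    ring
  have hfib := sum_filter_eq_zero_of_sum_eq_zero _ _ _ hmem hsq (i + 6 - 2 * k)
  have hfilter : {p ∈ S ×ˢ S | i + 6 - 2 * ((p.1 + p.2 : ℕ) : ℤ) = i + 6 - 2 * k} =
      antidiagonal k := by
    ext ⟨n, m⟩
    simp only [mem_filter, mem_product, HasAntidiagonal.mem_antidiagonal]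
    exact ⟨fun h => by omega, fun h => ⟨⟨hS n (by omega), hS m (by omega)⟩, by omega⟩⟩
  rwa [hfilter] at hfib

end SquareZero

section Derivation

open DirectSum

variable {R A : Type*} [CommRing R] [Ring A] [Algebra R A]
  {𝒜 : ℤ → Submodule R A} [Decomposition 𝒜] {d : A →ₗ[R] A}

theorem map_mul_of_map_eq_zero_right
    (hder : ∀ {i : ℤ} (a b : A), a ∈ 𝒜 i → d (a * b) = d a * b + i.negOnePow • (a * d b))
    {b : A} (hb : d b = 0) (x : A) : d (x * b) = d x * b := by
  have hext : d ∘ₗ LinearMap.mulRight R b = LinearMap.mulRight R b ∘ₗ d :=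
    linearMap_ext_of_decomposition (𝒜 := 𝒜) fun i a ha => by simp [hder a b ha, hb]
  exact LinearMap.congr_fun hext x

theorem exists_map_eq_mul_map
    (hder : ∀ {i : ℤ} (a b : A), a ∈ 𝒜 i → d (a * b) = d a * b + i.negOnePow • (a * d b))
    (hd : ∀ i, ∀ a ∈ 𝒜 i, d a ∈ 𝒜 (i + 1)) {a : A} (ha : d a = 0) (x : A) :
    ∃ y, a * d x = d y := by
  have hle : ⨆ i, 𝒜 i ⊓ LinearMap.ker d ≤
      (LinearMap.range d).comap (LinearMap.mulRight R (d x)) := by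
    refine iSup_le fun i c ⟨hc, hck⟩ => ⟨i.negOnePow • (c * x), ?_⟩
    replace hck : d c = 0 := hck
    rw [LinearMap.mulRight_apply, Units.smul_def, map_zsmul, ← Units.smul_def, hder c x hc, hck,
      zero_mul, zero_add, smul_smul, Int.units_mul_self, one_smul]
  obtain ⟨y, hy⟩ := hle (ker_le_iSup_inf_ker d 1 hd ha)
  exact ⟨y, hy.symm⟩

end Derivation

theorem stmt11_general {A : Type*} [Ring A] [Algebra ℚ A] (𝒜 : ℤ → Submodule ℚ A)
    (hinternal : DirectSum.IsInternal 𝒜)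
    (Dop : ℕ → (A →ₗ[ℚ] A)) (hD0 : Dop 0 = 0)
    (hdeg : ∀ n : ℕ, 1 ≤ n → ∀ {i : ℤ} {a : A}, a ∈ 𝒜 i →
      Dop n a ∈ 𝒜 (i + (3 - 2 * (n : ℤ))))
    (hfin : ∀ a : A, (Function.support fun n => Dop n a).Finite)
    (hder : ∀ {i : ℤ} (a b : A), a ∈ 𝒜 i →
      Dop 1 (a * b) = Dop 1 a * b + i.negOnePow • (a * Dop 1 b))
    (hDsq : ∀ a : A, (∑ᶠ n : ℕ, Dop n (∑ᶠ m : ℕ, Dop m a)) = 0)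
    (horder2 : ∀ {i j k : ℤ} (a b c : A), a ∈ 𝒜 i → b ∈ 𝒜 j → c ∈ 𝒜 k →
      FD (⇑(Dop 2)) (-1) [(c, k), (b, j), (a, i)] = 0) :
    (∀ a b : A, Dop 1 a = 0 → Dop 1 b = 0 → Dop 1 (a * b) = 0) ∧
    (∀ a x : A, Dop 1 a = 0 → ∃ y, a * Dop 1 x = Dop 1 y) ∧
    (∀ x b : A, Dop 1 b = 0 → ∃ y, Dop 1 x * b = Dop 1 y) ∧
    (∀ a : A, Dop 1 a = 0 → Dop 1 (Dop 2 a) = 0) ∧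
    (∀ x : A, ∃ y, Dop 2 (Dop 1 x) = Dop 1 y) ∧
    (∀ a : A, Dop 1 a = 0 → ∃ y, Dop 2 (Dop 2 a) = Dop 1 y) ∧
    (∀ {i j k : ℤ} (a b c : A), a ∈ 𝒜 i → b ∈ 𝒜 j → c ∈ 𝒜 k →
      Dop 1 a = 0 → Dop 1 b = 0 → Dop 1 c = 0 →
      ∃ y, FD (⇑(Dop 2)) (-1) [(c, k), (b, j), (a, i)] = Dop 1 y) := by
  let := hinternal.chooseDecomposition
  have hsq (k : ℕ) := LinearMap.congr_fun (sum_antidiagonal_comp_eq_zero Dop hD0 hdeg hfin hDsq k)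
  have hdD₂ (a : A) : Dop 1 (Dop 2 a) + Dop 2 (Dop 1 a) = 0 := by
    simpa [Finset.Nat.sum_antidiagonal_succ, hD0] using hsq 3 a
  have hdD₃ (a : A) : Dop 1 (Dop 3 a) + Dop 2 (Dop 2 a) + Dop 3 (Dop 1 a) = 0 := by
    simpa [Finset.Nat.sum_antidiagonal_succ, hD0, add_assoc] using hsq 4 a
  have hd (i : ℤ) (a : A) (ha : a ∈ 𝒜 i) : Dop 1 a ∈ 𝒜 (i + 1) := by
    simpa using hdeg 1 le_rfl ha
  refine ⟨fun a b ha hb => ?_, fun a x ha => exists_map_eq_mul_map hder hd ha x,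
    fun x b hb => ⟨x * b, (map_mul_of_map_eq_zero_right hder hb x).symm⟩,
    fun a ha => by simpa [ha] using hdD₂ a, fun x => ⟨-Dop 2 x, ?_⟩,
    fun a ha => ⟨-Dop 3 a, ?_⟩,
    fun a b c ha hb hc _ _ _ => ⟨0, by rw [horder2 a b c ha hb hc, map_zero]⟩⟩
  · rw [map_mul_of_map_eq_zero_right hder hb, ha, zero_mul]
  · rw [map_neg, eq_neg_iff_add_eq_zero, add_comm, hdD₂]
  · rw [map_neg, eq_neg_iff_add_eq_zero, add_comm]
    simpa [ha] using hdD₃ a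

/-- Let `(A, d, D)` be a commutative BV∞-algebra: `A` a ℤ-graded
commutative associative algebra, `D = d + D₂ + D₃ + ⋯` an odd square-zero operator
(encoded by its homogeneous components `Dop n` of degree `3 - 2n`, a locally finite
family with `d = Dop 1`, a derivation of degree `+1` with `d² = 0`), and assume the
degree `-1` component `D₂ = Dop 2` is a differential operator of order `≤ 2` on `A`.
Then the cohomology `H(A,d)` is a Batalin–Vilkovisky algebra: the product descends to
`H(A,d)` (cocycles are closed under multiplication and products with coboundaries are
coboundaries), `D₂` induces a well-defined operator on `H(A,d)` (it preserves cocycles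
and coboundaries) which squares to zero there, and the induced operator is a
differential operator of order `≤ 2` for the induced product (its third bracket
vanishes on cohomology classes, i.e. is a coboundary on homogeneous cocycles). -/
theorem stmt11 {A : Type*} [Ring A] [Algebra ℚ A] (𝒜 : ℤ → Submodule ℚ A)
    (hinternal : DirectSum.IsInternal 𝒜)
    (hmul : ∀ {i j : ℤ} {a b : A}, a ∈ 𝒜 i → b ∈ 𝒜 j → a * b ∈ 𝒜 (i + j))
    (hcomm : ∀ {i j : ℤ} (a b : A), a ∈ 𝒜 i → b ∈ 𝒜 j →
      a * b = (i * j).negOnePow • (b * a))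
    (Dop : ℕ → (A →ₗ[ℚ] A)) (hD0 : Dop 0 = 0)
    (hdeg : ∀ n : ℕ, 1 ≤ n → ∀ {i : ℤ} {a : A}, a ∈ 𝒜 i →
      Dop n a ∈ 𝒜 (i + (3 - 2 * (n : ℤ))))
    (hfin : ∀ a : A, (Function.support fun n => Dop n a).Finite)
    (hder : ∀ {i : ℤ} (a b : A), a ∈ 𝒜 i →
      Dop 1 (a * b) = Dop 1 a * b + i.negOnePow • (a * Dop 1 b))
    (hdsq : ∀ a : A, Dop 1 (Dop 1 a) = 0)
    (hDsq : ∀ a : A, (∑ᶠ n : ℕ, Dop n (∑ᶠ m : ℕ, Dop m a)) = 0)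
    (horder2 : ∀ {i j k : ℤ} (a b c : A), a ∈ 𝒜 i → b ∈ 𝒜 j → c ∈ 𝒜 k →
      FD (⇑(Dop 2)) (-1) [(c, k), (b, j), (a, i)] = 0) :
    (∀ a b : A, Dop 1 a = 0 → Dop 1 b = 0 → Dop 1 (a * b) = 0) ∧
    (∀ a x : A, Dop 1 a = 0 → ∃ y, a * Dop 1 x = Dop 1 y) ∧
    (∀ x b : A, Dop 1 b = 0 → ∃ y, Dop 1 x * b = Dop 1 y) ∧
    (∀ a : A, Dop 1 a = 0 → Dop 1 (Dop 2 a) = 0) ∧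
    (∀ x : A, ∃ y, Dop 2 (Dop 1 x) = Dop 1 y) ∧
    (∀ a : A, Dop 1 a = 0 → ∃ y, Dop 2 (Dop 2 a) = Dop 1 y) ∧
    (∀ {i j k : ℤ} (a b c : A), a ∈ 𝒜 i → b ∈ 𝒜 j → c ∈ 𝒜 k →
      Dop 1 a = 0 → Dop 1 b = 0 → Dop 1 c = 0 →
      ∃ y, FD (⇑(Dop 2)) (-1) [(c, k), (b, j), (a, i)] = Dop 1 y) :=
  stmt11_general 𝒜 hinternal Dop hD0 hdeg hfin hder hDsq horder2
end
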